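/- Let f : ℝ^d → ℝ be twice continuously differentiable with ∇²f(w) ⪯ L·I for all w (0 < L < ∞). Fix w ∈ ℝ^d and a symmetric d×d matrix H̃ with H̃ ⪰ μ̃·I (μ̃ > 0). Let g be an integrable ℝ^d-valued random vector with E[g] = ∇f(w), let 0 < α ≤ μ̃/L, and set w₊ = w − α H̃⁻¹ g and δ = g − ∇f(w). Then E[f(w₊)] ≤ f(w) − α(1 − Lα/(2μ̃))·∇f(w)ᵀ H̃⁻¹ ∇f(w) + (Lα²/(2μ̃))·E[δᵀ H̃⁻¹ δ]. -/

import Mathlib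

/-!
Integrating the Hessian bound along a segment gives the quadratic upper model
`f (w + v) ≤ f w + ⟪∇f w, v⟫ + L/2 ‖v‖²`. For the step `v = -α H̃⁻¹ g`, coercivity of `H̃` gives
`μ̃ ‖H̃⁻¹ g‖² ≤ ⟪H̃⁻¹ g, g⟫`, so the model is bounded by an affine function of `g` plus a multiple
of `⟪H̃⁻¹ g, g⟫`. Taking expectations, unbiasedness turns the linear term into
`⟪∇f w, H̃⁻¹ ∇f w⟫` and splits `E ⟪H̃⁻¹ g, g⟫` as `⟪H̃⁻¹ ∇f w, ∇f w⟫ + E ⟪H̃⁻¹ δ, δ⟫`.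
-/

open Finset Matrix MeasureTheory
open scoped RealInnerProductSpace

noncomputable section

abbrev Vec (d : ℕ) := EuclideanSpace ℝ (Fin d)

/-- The continuous linear operator on Euclidean space associated with a matrix. -/
noncomputable def toOp {d : ℕ} (A : Matrix (Fin d) (Fin d) ℝ) : Vec d →L[ℝ] Vec d :=
  LinearMap.toContinuousLinearMap (Matrix.toEuclideanLin A)

section Descent

variable {E : Type*} [NormedAddCommGroup E] [InnerProductSpace ℝ E]
  {f : E → ℝ} {gradf : E → E} {Hf : E → E →L[ℝ] E} {L : ℝ}

theorem hasDerivAt_comp_add_smul [CompleteSpace E] (hgrad : ∀ x, HasGradientAt f (gradf x) x)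
    (x v : E) (t : ℝ) :
    HasDerivAt (fun s : ℝ => f (x + s • v)) ⟪gradf (x + t • v), v⟫ t := by
  have hline : HasDerivAt (fun s : ℝ => x + s • v) v t := by
    simpa using ((hasDerivAt_id t).smul_const v).const_add x
  have := (hgrad (x + t • v)).hasFDerivAt.comp_hasDerivAt t hline
  simp only [InnerProductSpace.toDual_apply_apply] at this
  exact this

theorem hasDerivAt_inner_comp_add_smul (hHf : ∀ x, HasFDerivAt gradf (Hf x) x)
    (x v : E) (t : ℝ) :
    HasDerivAt (fun s : ℝ => ⟪gradf (x + s • v), v⟫) ⟪Hf (x + t • v) v, v⟫ t := by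
  have hline : HasDerivAt (fun s : ℝ => x + s • v) v t := by
    simpa using ((hasDerivAt_id t).smul_const v).const_add x
  simpa using ((hHf _).comp_hasDerivAt t hline).inner ℝ (hasDerivAt_const t v)

theorem le_add_inner_add_of_hessian_le [CompleteSpace E]
    (hgrad : ∀ x, HasGradientAt f (gradf x) x) (hHf : ∀ x, HasFDerivAt gradf (Hf x) x)
    (hHub : ∀ x v, ⟪Hf x v, v⟫ ≤ L * ‖v‖ ^ 2) (x v : E) :
    f (x + v) ≤ f x + ⟪gradf x, v⟫ + L / 2 * ‖v‖ ^ 2 := by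
  -- `slope` is the derivative of `t ↦ f (x + t • v) - L/2 ‖v‖² t²`; it is antitone, so this
  -- function lies below its tangent at `0`, i.e. `gap` is antitone on `[0, ∞)`.
  set slope : ℝ → ℝ := fun t => ⟪gradf (x + t • v), v⟫ - L * ‖v‖ ^ 2 * t
  have hslope_anti : Antitone slope := by
    refine antitone_of_hasDerivAt_nonpos
      (f' := fun t => ⟪Hf (x + t • v) v, v⟫ - L * ‖v‖ ^ 2) (fun t => ?_) (fun t => ?_)
    · exact ((hasDerivAt_inner_comp_add_smul hHf x v t).sub
        ((hasDerivAt_id t).const_mul (L * ‖v‖ ^ 2))).congr_deriv (by rw [mul_one])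
    · simpa using hHub (x + t • v) v
  set gap : ℝ → ℝ := fun t => f (x + t • v) - L / 2 * ‖v‖ ^ 2 * t ^ 2 - t * slope 0
  have hgap (t : ℝ) : HasDerivAt gap (slope t - slope 0) t :=
    (((hasDerivAt_comp_add_smul hgrad x v t).sub
      ((hasDerivAt_pow 2 t).const_mul (L / 2 * ‖v‖ ^ 2))).sub
      ((hasDerivAt_id t).mul_const (slope 0))).congr_deriv (by simp only [slope]; ring)
  have hgap_anti : AntitoneOn gap (Set.Ici 0) :=
    antitoneOn_of_hasDerivWithinAt_nonpos (convex_Ici 0)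
      (fun t _ => (hgap t).continuousAt.continuousWithinAt)
      (fun t _ => (hgap t).hasDerivWithinAt)
      (fun t ht => sub_nonpos.2 (hslope_anti (interior_subset ht)))
  have := hgap_anti (Set.self_mem_Ici) (Set.mem_Ici.2 zero_le_one) zero_le_one
  simp only [gap, slope] at this
  norm_num at this
  linarith

theorem le_sub_inner_add_of_descent {w G p q : E} {μ α : ℝ} (hL : 0 ≤ L) (hμ : 0 < μ)
    (hdesc : ∀ v, f (w + v) ≤ f w + ⟪G, v⟫ + L / 2 * ‖v‖ ^ 2)
    (hpq : μ * ‖p‖ ^ 2 ≤ ⟪p, q⟫) :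
    f (w - α • p) ≤ f w - α * ⟪G, p⟫ + L * α ^ 2 / (2 * μ) * ⟪p, q⟫ := by
  have hstep := hdesc (-(α • p))
  rw [← sub_eq_add_neg, inner_neg_right, real_inner_smul_right, norm_neg, norm_smul,
    Real.norm_eq_abs, mul_pow, sq_abs] at hstep
  have hnorm : ‖p‖ ^ 2 ≤ ⟪p, q⟫ / μ := by rw [le_div_iff₀ hμ]; linarith
  calc f (w - α • p) ≤ f w + -(α * ⟪G, p⟫) + L / 2 * (α ^ 2 * ‖p‖ ^ 2) := hstep
    _ ≤ f w + -(α * ⟪G, p⟫) + L / 2 * (α ^ 2 * (⟪p, q⟫ / μ)) := by gcongr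
    _ = f w - α * ⟪G, p⟫ + L * α ^ 2 / (2 * μ) * ⟪p, q⟫ := by ring

end Descent

section Coercive

variable {d : ℕ} {A : Matrix (Fin d) (Fin d) ℝ} {μ : ℝ}

theorem isUnit_det_of_coercive (hμ : 0 < μ)
    (hA : ∀ v : Vec d, μ * ‖v‖ ^ 2 ≤ ⟪toOp A v, v⟫) : IsUnit A.det := by
  have hinj : Function.Injective (toOp A) := (injective_iff_map_eq_zero _).2 fun v hv => by
    have hcoer := hA v
    rw [hv, inner_zero_left] at hcoer
    have : ‖v‖ ^ 2 ≤ 0 := nonpos_of_mul_nonpos_right hcoer hμ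
    simpa using this
  have hmulVec : Function.Injective A.mulVec := fun a b hab =>
    congrArg WithLp.ofLp
      (hinj (a₁ := WithLp.toLp 2 a) (a₂ := WithLp.toLp 2 b) (by simp [toOp, hab]))
  exact (isUnit_iff_isUnit_det A).1 (mulVec_injective_iff_isUnit.1 hmulVec)

theorem toOp_apply_toOp_inv (hμ : 0 < μ) (hA : ∀ v : Vec d, μ * ‖v‖ ^ 2 ≤ ⟪toOp A v, v⟫)
    (u : Vec d) : toOp A (toOp A⁻¹ u) = u := by
  simp [toOp, toLpLin_apply, mulVec_mulVec, mul_nonsing_inv _ (isUnit_det_of_coercive hμ hA)]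

theorem mul_norm_toOp_inv_sq_le (hμ : 0 < μ) (hA : ∀ v : Vec d, μ * ‖v‖ ^ 2 ≤ ⟪toOp A v, v⟫)
    (u : Vec d) : μ * ‖toOp A⁻¹ u‖ ^ 2 ≤ ⟪toOp A⁻¹ u, u⟫ := by
  simpa [toOp_apply_toOp_inv hμ hA, real_inner_comm] using hA (toOp A⁻¹ u)

end Coercive

section Expectation

variable {E : Type*} [NormedAddCommGroup E] [InnerProductSpace ℝ E]
  {Ω : Type*} [MeasurableSpace Ω] {P : Measure Ω}

theorem inner_map_self_eq_inner_map_sub_self_sub (B : E →L[ℝ] E) (q m : E) :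
    ⟪B q, q⟫ = ⟪B (q - m), q - m⟫ + ⟪m, B q⟫ + ⟪B m, q⟫ - ⟪B m, m⟫ := by
  simp only [map_sub, inner_sub_left, inner_sub_right, real_inner_comm m (B q)]
  ring

theorem integrable_inner_map_self [IsFiniteMeasure P] {B : E →L[ℝ] E} {g : Ω → E} {m : E}
    (hg : Integrable g P) (hvar : Integrable (fun ω => ⟪B (g ω - m), g ω - m⟫) P) :
    Integrable (fun ω => ⟪B (g ω), g ω⟫) P := by
  rw [funext fun ω => inner_map_self_eq_inner_map_sub_self_sub B (g ω) m]
  exact ((hvar.add ((B.integrable_comp hg).const_inner m)).add (hg.const_inner (B m))).sub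
    (integrable_const _)

theorem integral_inner_map_self [CompleteSpace E] [IsProbabilityMeasure P] (B : E →L[ℝ] E)
    {g : Ω → E} {m : E} (hg : Integrable g P) (hmean : ∫ ω, g ω ∂P = m)
    (hvar : Integrable (fun ω => ⟪B (g ω - m), g ω - m⟫) P) :
    ∫ ω, ⟪B (g ω), g ω⟫ ∂P = ⟪B m, m⟫ + ∫ ω, ⟪B (g ω - m), g ω - m⟫ ∂P := by
  have hBg := B.integrable_comp hg
  rw [funext fun ω => inner_map_self_eq_inner_map_sub_self_sub B (g ω) m,
    integral_sub _ (integrable_const _), integral_add _ (hg.const_inner (B m)),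
    integral_add hvar (hBg.const_inner m), integral_inner hBg, integral_inner hg,
    B.integral_comp_comm hg, hmean, integral_const, probReal_univ, one_smul,
    real_inner_comm m (B m)]
  · ring
  · exact hvar.add (hBg.const_inner m)
  · exact (hvar.add (hBg.const_inner m)).add (hg.const_inner (B m))

end Expectation

theorem expected_descent_lemma_unbiased_gradient_general {d : ℕ}
    {Ω : Type*} [MeasurableSpace Ω] (μP : Measure Ω) [IsProbabilityMeasure μP]
    (L μt α : ℝ) (hL : 0 < L) (hμt : 0 < μt)
    (f : Vec d → ℝ) (gradf : Vec d → Vec d) (Hf : Vec d → (Vec d →L[ℝ] Vec d))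
    (hgrad : ∀ x, HasGradientAt f (gradf x) x)
    (hHf : ∀ x, HasFDerivAt gradf (Hf x) x)
    (hHub : ∀ x (v : Vec d), ⟪Hf x v, v⟫ ≤ L * ‖v‖ ^ 2)
    (w : Vec d)
    (Ht : Matrix (Fin d) (Fin d) ℝ)
    (hHtlb : ∀ v : Vec d, μt * ‖v‖ ^ 2 ≤ ⟪toOp Ht v, v⟫)
    (g : Ω → Vec d) (hgint : Integrable g μP)
    (hmean : ∫ ω, g ω ∂μP = gradf w)
    (hfint : Integrable (fun ω => f (w - α • toOp Ht⁻¹ (g ω))) μP)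
    (hqint : Integrable
      (fun ω => ⟪toOp Ht⁻¹ (g ω - gradf w), g ω - gradf w⟫) μP) :
    ∫ ω, f (w - α • toOp Ht⁻¹ (g ω)) ∂μP ≤
      f w - α * (1 - L * α / (2 * μt)) * ⟪toOp Ht⁻¹ (gradf w), gradf w⟫
      + L * α ^ 2 / (2 * μt) *
        ∫ ω, ⟪toOp Ht⁻¹ (g ω - gradf w), g ω - gradf w⟫ ∂μP := by
  set B := toOp Ht⁻¹
  set c := L * α ^ 2 / (2 * μt)
  have hstep (ω : Ω) :
      f (w - α • B (g ω)) ≤ f w - α * ⟪gradf w, B (g ω)⟫ + c * ⟪B (g ω), g ω⟫ :=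
    le_sub_inner_add_of_descent hL.le hμt (le_add_inner_add_of_hessian_le hgrad hHf hHub w)
      (mul_norm_toOp_inv_sq_le hμt hHtlb (g ω))
  have hlin : Integrable (fun ω => α * ⟪gradf w, B (g ω)⟫) μP :=
    ((B.integrable_comp hgint).const_inner _).const_mul α
  have haffine : Integrable (fun ω => f w - α * ⟪gradf w, B (g ω)⟫) μP :=
    (integrable_const _).sub hlin
  have hquad := (integrable_inner_map_self hgint hqint).const_mul c
  calc ∫ ω, f (w - α • B (g ω)) ∂μP
      ≤ ∫ ω, (f w - α * ⟪gradf w, B (g ω)⟫ + c * ⟪B (g ω), g ω⟫) ∂μP :=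
        integral_mono hfint (haffine.add hquad) hstep
    _ = f w - α * ⟪gradf w, B (gradf w)⟫
          + c * (⟪B (gradf w), gradf w⟫ + ∫ ω, ⟪B (g ω - gradf w), g ω - gradf w⟫ ∂μP) := by
        rw [integral_add haffine hquad, integral_sub (integrable_const _) hlin,
          integral_const_mul, integral_const_mul, integral_const, probReal_univ, one_smul,
          integral_inner (B.integrable_comp hgint), B.integral_comp_comm hgint, hmean,
          integral_inner_map_self B hgint hmean hqint]
    _ = _ := by
        rw [real_inner_comm (gradf w)]
        ring

/-- One-step expected descent bound for an unbiased stochastic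
gradient in an inexact Newton-type step. -/
theorem expected_descent_lemma_unbiased_gradient {d : ℕ}
    {Ω : Type*} [MeasurableSpace Ω] (μP : Measure Ω) [IsProbabilityMeasure μP]
    (L μt α : ℝ) (hL : 0 < L) (hμt : 0 < μt) (hα0 : 0 < α) (hα : α ≤ μt / L)
    (f : Vec d → ℝ) (gradf : Vec d → Vec d) (Hf : Vec d → (Vec d →L[ℝ] Vec d))
    (hsmooth : ContDiff ℝ 2 f)
    (hgrad : ∀ x, HasGradientAt f (gradf x) x)
    (hHf : ∀ x, HasFDerivAt gradf (Hf x) x)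
    (hHub : ∀ x (v : Vec d), ⟪Hf x v, v⟫ ≤ L * ‖v‖ ^ 2)
    (w : Vec d)
    (Ht : Matrix (Fin d) (Fin d) ℝ) (hHtsym : Ht.IsSymm)
    (hHtlb : ∀ v : Vec d, μt * ‖v‖ ^ 2 ≤ ⟪toOp Ht v, v⟫)
    (g : Ω → Vec d) (hgint : Integrable g μP)
    (hmean : ∫ ω, g ω ∂μP = gradf w)
    (hfint : Integrable (fun ω => f (w - α • toOp Ht⁻¹ (g ω))) μP)
    (hqint : Integrable
      (fun ω => ⟪toOp Ht⁻¹ (g ω - gradf w), g ω - gradf w⟫) μP) :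
    ∫ ω, f (w - α • toOp Ht⁻¹ (g ω)) ∂μP ≤
      f w - α * (1 - L * α / (2 * μt)) * ⟪toOp Ht⁻¹ (gradf w), gradf w⟫
      + L * α ^ 2 / (2 * μt) *
        ∫ ω, ⟪toOp Ht⁻¹ (g ω - gradf w), g ω - gradf w⟫ ∂μP :=
  expected_descent_lemma_unbiased_gradient_general μP L μt α hL hμt f gradf Hf hgrad hHf hHub w Ht
    hHtlb g hgint hmean hfint hqint
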